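/- arXiv:2003.09969 — 2 statements merged into one kernel-verified Lean document; each statement's English description precedes it below -/
import Mathlib

section
/- Let M and N be symmetric n×n matrices, let λ_i(M) be an eigenvalue of M with multiplicity one satisfying min_{j ≠ i} |λ_i(M) - λ_j(M)| = δ > 0. Then the unit eigenvectors v_i(M) and v_i(M+N) (with signs chosen so their inner product is nonnegative) satisfy sin(∠(v_i(M), v_i(M+N))) ≤ 2‖N‖/δ. -/
open scoped BigOperators

noncomputable section

def ip {n : ℕ} (x y : Fin n → ℝ) : ℝ := ∑ i, x i * y i

def evnorm {n : ℕ} (x : Fin n → ℝ) : ℝ := Real.sqrt (ip x x)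

namespace DKaux

variable {n : ℕ}

lemma ip_comm (x y : Fin n → ℝ) : ip x y = ip y x := by
  simp [ip, mul_comm]

lemma ip_nonneg (x : Fin n → ℝ) : 0 ≤ ip x x :=
  Finset.sum_nonneg fun i _ => mul_self_nonneg _

lemma ip_zero_right (x : Fin n → ℝ) : ip x 0 = 0 := by simp [ip]

lemma ip_add_right (x y z : Fin n → ℝ) : ip x (y + z) = ip x y + ip x z := by
  simp [ip, mul_add, Finset.sum_add_distrib]

lemma ip_sub_right (x y z : Fin n → ℝ) : ip x (y - z) = ip x y - ip x z := by
  simp [ip, mul_sub, Finset.sum_sub_distrib]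

lemma ip_smul_right (a : ℝ) (x y : Fin n → ℝ) : ip x (a • y) = a * ip x y := by
  simp only [ip, Pi.smul_apply, smul_eq_mul, Finset.mul_sum]
  exact Finset.sum_congr rfl fun i _ => by ring

lemma ip_sum_right {α : Type*} (s : Finset α) (f : α → Fin n → ℝ) (x : Fin n → ℝ) :
    ip x (∑ j ∈ s, f j) = ∑ j ∈ s, ip x (f j) := by
  simp only [ip, Finset.sum_apply, Finset.mul_sum]
  exact Finset.sum_comm

lemma ip_sum_left {α : Type*} (s : Finset α) (f : α → Fin n → ℝ) (x : Fin n → ℝ) :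
    ip (∑ j ∈ s, f j) x = ∑ j ∈ s, ip (f j) x := by
  rw [ip_comm, ip_sum_right]
  exact Finset.sum_congr rfl fun j _ => ip_comm _ _

lemma evnorm_nonneg (x : Fin n → ℝ) : 0 ≤ evnorm x := Real.sqrt_nonneg _

lemma evnorm_sq (x : Fin n → ℝ) : evnorm x ^ 2 = ip x x :=
  Real.sq_sqrt (ip_nonneg x)

lemma ip_le_evnorm (x y : Fin n → ℝ) : ip x y ≤ evnorm x * evnorm y := by
  have h := Finset.sum_mul_sq_le_sq_mul_sq Finset.univ x y
  have h2 : (ip x y) ^ 2 ≤ ip x x * ip y y := by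
    simpa [ip, sq] using h
  calc ip x y ≤ |ip x y| := le_abs_self _
    _ = Real.sqrt ((ip x y) ^ 2) := (Real.sqrt_sq_eq_abs _).symm
    _ ≤ Real.sqrt (ip x x * ip y y) := Real.sqrt_le_sqrt h2
    _ = evnorm x * evnorm y := Real.sqrt_mul (ip_nonneg x) _

lemma ip_mulVec_symm (A : Matrix (Fin n) (Fin n) ℝ) (hA : A.IsSymm) (x y : Fin n → ℝ) :
    ip (A.mulVec x) y = ip x (A.mulVec y) := by
  simp only [ip, Matrix.mulVec, dotProduct, Finset.sum_mul, Finset.mul_sum]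
  rw [Finset.sum_comm]
  refine Finset.sum_congr rfl fun j _ => Finset.sum_congr rfl fun k _ => ?_
  rw [hA.apply j k]
  ring

lemma mulVec_sum {α : Type*} (A : Matrix (Fin n) (Fin n) ℝ) (s : Finset α)
    (f : α → Fin n → ℝ) : A.mulVec (∑ j ∈ s, f j) = ∑ j ∈ s, A.mulVec (f j) := by
  ext k
  simp only [Matrix.mulVec, dotProduct, Finset.sum_apply, Finset.mul_sum]
  rw [Finset.sum_comm]

section Orth

variable {u : Fin n → Fin n → ℝ}
  (huorth : ∀ i j : Fin n, ip (u i) (u j) = if i = j then 1 else 0)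

include huorth

lemma ip_expand {ι : Type*} [Fintype ι] [DecidableEq ι] {e : ι → Fin n}
    (he : Function.Injective e) (a : ι → ℝ) (k : ι) :
    ip (u (e k)) (∑ j, a j • u (e j)) = a k := by
  rw [ip_sum_right]
  simp only [ip_smul_right, huorth, he.eq_iff]
  simp

lemma ip_self_expand {ι : Type*} [Fintype ι] [DecidableEq ι] {e : ι → Fin n}
    (he : Function.Injective e) (a : ι → ℝ) :
    ip (∑ j, a j • u (e j)) (∑ j, a j • u (e j)) = ∑ j, a j ^ 2 := by
  rw [ip_sum_left]
  refine Finset.sum_congr rfl fun k _ => ?_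
  rw [ip_comm, ip_smul_right, ip_comm, ip_expand huorth he]
  ring

lemma orth_li {ι : Type*} [Fintype ι] [DecidableEq ι] {e : ι → Fin n}
    (he : Function.Injective e) : LinearIndependent ℝ (fun j => u (e j)) := by
  rw [Fintype.linearIndependent_iff]
  intro g hg k
  have := ip_expand huorth he g k
  rw [hg, ip_zero_right] at this
  exact this.symm

/-- Expansion of any vector in the orthonormal basis. -/
lemma expand (hn : 0 < n) (x : Fin n → ℝ) : ∑ j, ip (u j) x • u j = x := by
  haveI : Nonempty (Fin n) := ⟨⟨0, hn⟩⟩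
  have hli : LinearIndependent ℝ u := by
    have := orth_li huorth (e := id) Function.injective_id
    simpa using this
  have hspan : Submodule.span ℝ (Set.range u) = ⊤ := by
    apply LinearIndependent.span_eq_top_of_card_eq_finrank hli
    simp [Module.finrank_fin_fun]
  have hx : x ∈ Submodule.span ℝ (Set.range u) := by rw [hspan]; trivial
  obtain ⟨d, hd⟩ := (Submodule.mem_span_range_iff_exists_fun ℝ).mp hx
  have hcoef : ∀ k, ip (u k) x = d k := by
    intro k
    rw [← hd]
    have := ip_expand huorth (e := id) Function.injective_id d k
    simpa using this
  have hterm : ∀ k, ip (u k) x • u k = d k • u k := fun k => by rw [hcoef k]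
  rw [Finset.sum_congr rfl fun k _ => hterm k, hd]

lemma ip_self_eq_sum_sq (hn : 0 < n) (x : Fin n → ℝ) : ip x x = ∑ j, (ip (u j) x) ^ 2 := by
  conv_lhs => rw [← expand huorth hn x]
  have := ip_self_expand huorth (e := id) Function.injective_id (fun j => ip (u j) x)
  simpa using this

end Orth

/-- Abstract Weyl-type inequality via dimension counting. -/
lemma weyl (A B : Matrix (Fin n) (Fin n) ℝ) (hA : A.IsSymm)
    (mua nub : Fin n → ℝ) (u w : Fin n → Fin n → ℝ)
    (huorth : ∀ i j : Fin n, ip (u i) (u j) = if i = j then 1 else 0)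
    (hworth : ∀ i j : Fin n, ip (w i) (w j) = if i = j then 1 else 0)
    (hueig : ∀ i, A.mulVec (u i) = mua i • u i)
    (hweig : ∀ i, B.mulVec (w i) = nub i • w i)
    (hmu : Antitone mua) (hnu : Antitone nub)
    (c : ℝ) (hc : ∀ x, evnorm ((B - A).mulVec x) ≤ c * evnorm x) (i : Fin n) :
    nub i ≤ mua i + c := by
  classical
  set V := Submodule.span ℝ (Set.range fun j : {j : Fin n // i ≤ j} => u j.val) with hV
  set W := Submodule.span ℝ (Set.range fun j : {j : Fin n // j ≤ i} => w j.val) with hW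
  have hVrank : Module.finrank ℝ V = n - (i : ℕ) := by
    rw [hV, finrank_span_eq_card (orth_li huorth Subtype.val_injective)]
    rw [Fintype.card_subtype, ← Fin.card_Ici i]
    congr 1; ext j; simp [Finset.mem_Ici]
  have hWrank : Module.finrank ℝ W = (i : ℕ) + 1 := by
    rw [hW, finrank_span_eq_card (orth_li hworth Subtype.val_injective)]
    rw [Fintype.card_subtype, ← Fin.card_Iic i]
    congr 1; ext j; simp [Finset.mem_Iic]
  have hinf : V ⊓ W ≠ ⊥ := by
    have hsum := Submodule.finrank_sup_add_finrank_inf_eq V W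
    have hle : Module.finrank ℝ ↥(V ⊔ W) ≤ n := by
      have := Submodule.finrank_le (V ⊔ W)
      rwa [Module.finrank_fin_fun] at this
    have hpos : 0 < Module.finrank ℝ ↥(V ⊓ W) := by
      have hi : (i : ℕ) < n := i.isLt
      omega
    rw [← Submodule.nontrivial_iff_ne_bot]
    exact Module.nontrivial_of_finrank_pos hpos
  obtain ⟨x, hxmem, hxne⟩ := (Submodule.ne_bot_iff _).mp hinf
  obtain ⟨hxV, hxW⟩ := Submodule.mem_inf.mp hxmem
  obtain ⟨a, ha⟩ := (Submodule.mem_span_range_iff_exists_fun ℝ).mp hxV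
  obtain ⟨b, hb⟩ := (Submodule.mem_span_range_iff_exists_fun ℝ).mp hxW
  have hipxx_pos : 0 < ip x x := by
    rcases lt_or_eq_of_le (ip_nonneg x) with h | h
    · exact h
    · exfalso
      apply hxne
      funext k
      have hsum : ∑ j, x j * x j = 0 := by simpa [ip] using h.symm
      have := (Finset.sum_eq_zero_iff_of_nonneg
        (fun j _ => mul_self_nonneg (x j))).mp hsum k (Finset.mem_univ k)
      have : x k ^ 2 = 0 := by nlinarith
      exact pow_eq_zero_iff (by norm_num) |>.mp this
  -- coefficients recovered by inner products
  have hau : ∀ k : {j : Fin n // i ≤ j}, ip x (u k.val) = a k := by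
    intro k
    rw [ip_comm, ← ha]
    exact ip_expand huorth Subtype.val_injective a k
  have hbw : ∀ k : {j : Fin n // j ≤ i}, ip x (w k.val) = b k := by
    intro k
    rw [ip_comm, ← hb]
    exact ip_expand hworth Subtype.val_injective b k
  have hxxa : ip x x = ∑ j, a j ^ 2 := by
    conv_lhs => rw [← ha]
    exact ip_self_expand huorth Subtype.val_injective a
  have hxxb : ip x x = ∑ j, b j ^ 2 := by
    conv_lhs => rw [← hb]
    exact ip_self_expand hworth Subtype.val_injective b
  -- quadratic form bounds
  have hAx : ip x (A.mulVec x) ≤ mua i * ip x x := by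
    have hAmul : A.mulVec x = ∑ k : {j : Fin n // i ≤ j}, a k • (mua k.val • u k.val) := by
      rw [← ha, mulVec_sum]
      exact Finset.sum_congr rfl fun k _ => by rw [Matrix.mulVec_smul, hueig]
    have heq : ip x (A.mulVec x) = ∑ k : {j : Fin n // i ≤ j}, mua k.val * a k ^ 2 := by
      rw [hAmul, ip_sum_right]
      refine Finset.sum_congr rfl fun k _ => ?_
      rw [ip_smul_right, ip_smul_right, hau k]
      ring
    rw [heq, hxxa, Finset.mul_sum]
    exact Finset.sum_le_sum fun k _ =>
      mul_le_mul_of_nonneg_right (hmu k.prop) (sq_nonneg _)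
  have hBx : nub i * ip x x ≤ ip x (B.mulVec x) := by
    have hBmul : B.mulVec x = ∑ k : {j : Fin n // j ≤ i}, b k • (nub k.val • w k.val) := by
      rw [← hb, mulVec_sum]
      exact Finset.sum_congr rfl fun k _ => by rw [Matrix.mulVec_smul, hweig]
    have heq : ip x (B.mulVec x) = ∑ k : {j : Fin n // j ≤ i}, nub k.val * b k ^ 2 := by
      rw [hBmul, ip_sum_right]
      refine Finset.sum_congr rfl fun k _ => ?_
      rw [ip_smul_right, ip_smul_right, hbw k]
      ring
    rw [heq, hxxb, Finset.mul_sum]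
    exact Finset.sum_le_sum fun k _ =>
      mul_le_mul_of_nonneg_right (hnu k.prop) (sq_nonneg _)
  have hNx : ip x ((B - A).mulVec x) ≤ c * ip x x := by
    calc ip x ((B - A).mulVec x) ≤ evnorm x * evnorm ((B - A).mulVec x) :=
          ip_le_evnorm _ _
      _ ≤ evnorm x * (c * evnorm x) :=
          mul_le_mul_of_nonneg_left (hc x) (evnorm_nonneg x)
      _ = c * (evnorm x ^ 2) := by ring
      _ = c * ip x x := by rw [evnorm_sq]
  have hdecomp : ip x (B.mulVec x) = ip x (A.mulVec x) + ip x ((B - A).mulVec x) := by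
    rw [Matrix.sub_mulVec, ip_sub_right]
    ring
  have : nub i * ip x x ≤ (mua i + c) * ip x x := by
    calc nub i * ip x x ≤ ip x (B.mulVec x) := hBx
      _ = ip x (A.mulVec x) + ip x ((B - A).mulVec x) := hdecomp
      _ ≤ mua i * ip x x + c * ip x x := add_le_add hAx hNx
      _ = (mua i + c) * ip x x := by ring
  exact le_of_mul_le_mul_right (by linarith [this]) hipxx_pos

end DKaux

open DKaux in
theorem stmt_14 (n : ℕ) (M N : Matrix (Fin n) (Fin n) ℝ)
    (hM : M.IsSymm) (hN : N.IsSymm)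
    (mu nu : Fin n → ℝ) (u w : Fin n → (Fin n → ℝ))
    (huorth : ∀ i j : Fin n, ip (u i) (u j) = if i = j then 1 else 0)
    (hworth : ∀ i j : Fin n, ip (w i) (w j) = if i = j then 1 else 0)
    (hueig : ∀ i, M.mulVec (u i) = mu i • u i)
    (hweig : ∀ i, (M + N).mulVec (w i) = nu i • w i)
    (hmu : Antitone mu) (hnu : Antitone nu)
    (i : Fin n) (δ : ℝ) (hδ : 0 < δ)
    (hsep : ∀ j : Fin n, j ≠ i → δ ≤ |mu i - mu j|)
    (hsign : 0 ≤ ip (u i) (w i))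
    (c : ℝ) (hc : ∀ x : Fin n → ℝ, evnorm (N.mulVec x) ≤ c * evnorm x) :
    Real.sqrt (1 - (ip (u i) (w i)) ^ 2) ≤ 2 * c / δ := by
  classical
  set a : Fin n → ℝ := fun j => ip (u j) (w i) with ha
  set y : Fin n → ℝ := N.mulVec (w i) with hy
  set b : Fin n → ℝ := fun j => ip (u j) y with hb
  have hwnorm : ip (w i) (w i) = 1 := by simpa using hworth i i
  have hevw : evnorm (w i) = 1 := by rw [evnorm, hwnorm, Real.sqrt_one]
  have hc0 : 0 ≤ c := by
    have h1 := hc (w i)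
    have h2 := evnorm_nonneg (N.mulVec (w i))
    rw [hevw] at h1
    linarith
  have hn : 0 < n := i.pos
  have hasum : ∑ j, a j ^ 2 = 1 := by
    rw [ha, ← ip_self_eq_sum_sq huorth hn (w i), hwnorm]
  have hbrel : ∀ j, (nu i - mu j) * a j = b j := by
    intro j
    have h1 : ip (u j) ((M + N).mulVec (w i)) = nu i * a j := by
      rw [hweig, ip_smul_right]
    have h2 : ip (u j) ((M + N).mulVec (w i)) = mu j * a j + b j := by
      rw [Matrix.add_mulVec, ip_add_right, ← ip_mulVec_symm M hM, hueig,
        ip_comm, ip_smul_right, ip_comm (w i) (u j), hb]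
    rw [h1] at h2
    linarith [h2]
  have hbsum : ∑ j, b j ^ 2 ≤ c ^ 2 := by
    have h1 : ∑ j, b j ^ 2 = ip y y := (ip_self_eq_sum_sq huorth hn y).symm
    have h2 : evnorm y ≤ c := by
      have := hc (w i)
      rwa [hevw, mul_one] at this
    rw [h1, ← evnorm_sq]
    exact pow_le_pow_left₀ (evnorm_nonneg y) h2 2
  have haisq : 1 - a i ^ 2 = ∑ j ∈ Finset.univ.erase i, a j ^ 2 := by
    have h := Finset.sum_erase_add Finset.univ (fun j => a j ^ 2) (Finset.mem_univ i)
    rw [hasum] at h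
    have h' : ∑ j ∈ Finset.univ.erase i, a j ^ 2 + a i ^ 2 = 1 := by simpa using h
    linarith
  have hnonneg : 0 ≤ 1 - a i ^ 2 := by
    rw [haisq]
    exact Finset.sum_nonneg fun j _ => sq_nonneg _
  by_cases hcase : δ ≤ 2 * c
  · have h1 : Real.sqrt (1 - a i ^ 2) ≤ 1 :=
      Real.sqrt_le_one.mpr (by nlinarith [sq_nonneg (a i)])
    have h2 : 1 ≤ 2 * c / δ := (le_div_iff₀ hδ).mpr (by linarith)
    exact h1.trans h2
  · push_neg at hcase
    -- Weyl: |nu i - mu i| ≤ c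
    have hweyl1 : nu i ≤ mu i + c := by
      refine weyl M (M + N) hM mu nu u w huorth hworth hueig hweig hmu hnu c ?_ i
      intro x
      have : M + N - M = N := by abel
      rw [this]
      exact hc x
    have hweyl2 : mu i ≤ nu i + c := by
      refine weyl (M + N) M (by rw [Matrix.IsSymm, Matrix.transpose_add, hM, hN])
        nu mu w u hworth huorth hweig hueig hnu hmu c ?_ i
      intro x
      have h1 : M - (M + N) = -N := by abel
      have h2 : evnorm ((-N).mulVec x) = evnorm (N.mulVec x) := by
        rw [Matrix.neg_mulVec]
        simp [evnorm, ip]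
      rw [h1, h2]
      exact hc x
    have hgap : ∀ j : Fin n, j ≠ i → δ - c ≤ |nu i - mu j| := by
      intro j hj
      have h1 : |mu i - mu j| ≤ |mu i - nu i| + |nu i - mu j| := by
        have := abs_add_le (mu i - nu i) (nu i - mu j)
        simpa using this
      have h2 : |mu i - nu i| ≤ c := by
        rw [abs_sub_comm]
        rw [abs_le]
        constructor <;> linarith
      have := hsep j hj
      linarith
    have hdc : 0 < δ - c := by linarith
    have key : (δ - c) ^ 2 * (1 - a i ^ 2) ≤ c ^ 2 := by
      rw [haisq, Finset.mul_sum]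
      calc ∑ j ∈ Finset.univ.erase i, (δ - c) ^ 2 * a j ^ 2
          ≤ ∑ j ∈ Finset.univ.erase i, b j ^ 2 := by
            refine Finset.sum_le_sum fun j hj => ?_
            have hji : j ≠ i := Finset.ne_of_mem_erase hj
            have hg := hgap j hji
            have h1 : (δ - c) ^ 2 ≤ (nu i - mu j) ^ 2 := by
              have := sq_abs (nu i - mu j)
              nlinarith [abs_nonneg (nu i - mu j)]
            calc (δ - c) ^ 2 * a j ^ 2 ≤ (nu i - mu j) ^ 2 * a j ^ 2 :=
                  mul_le_mul_of_nonneg_right h1 (sq_nonneg _)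
              _ = ((nu i - mu j) * a j) ^ 2 := by ring
              _ = b j ^ 2 := by rw [hbrel j]
        _ ≤ ∑ j, b j ^ 2 :=
            Finset.sum_le_sum_of_subset_of_nonneg (Finset.subset_univ _)
              (fun j _ _ => sq_nonneg _)
        _ ≤ c ^ 2 := hbsum
    have hfin : 1 - a i ^ 2 ≤ (c / (δ - c)) ^ 2 := by
      rw [div_pow, le_div_iff₀ (by positivity)]
      nlinarith [key]
    have h1 : Real.sqrt (1 - a i ^ 2) ≤ c / (δ - c) := by
      calc Real.sqrt (1 - a i ^ 2) ≤ Real.sqrt ((c / (δ - c)) ^ 2) :=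
            Real.sqrt_le_sqrt hfin
        _ = c / (δ - c) := Real.sqrt_sq (div_nonneg hc0 hdc.le)
    have h2 : c / (δ - c) ≤ 2 * c / δ := by
      rw [div_le_div_iff₀ hdc hδ]
      nlinarith [mul_nonneg hc0 (by linarith : (0:ℝ) ≤ δ - 2 * c)]
    exact h1.trans h2
end
end

section
/- Let M and N be symmetric n×n matrices. Then for each i, |λ_i(M+N) - λ_i(M)| ≤ ‖N‖, where λ_i denotes the i-th largest eigenvalue and ‖N‖ the operator norm. -/
/-! Courant–Fischer: the span of the eigenvectors of `M + N` for its `i + 1` largest eigenvalues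
and the span of the eigenvectors of `M` for its `n - i` smallest ones have dimensions adding up to
`n + 1`, so they share a nonzero vector `x`. Its Rayleigh quotient is at least `λ_i(M + N)` for
`M + N` and at most `λ_i(M)` for `M`, and the two quotients differ by that of `N`, which is at most
`‖N‖` in absolute value. Exchanging the roles of `M` and `M + N` gives the other inequality. -/

open scoped BigOperators

noncomputable section

open Module Submodule
open WithLp (toLp ofLp)
open scoped InnerProductSpace

theorem Submodule.exists_mem_inf_ne_zero_of_finrank_lt {K V : Type*} [DivisionRing K]
    [AddCommGroup V] [Module K V] [FiniteDimensional K V] {s t : Submodule K V}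
    (h : finrank K V < finrank K s + finrank K t) : ∃ x ∈ s, x ∈ t ∧ x ≠ 0 := by
  by_contra! hst
  exact h.not_ge (finrank_add_finrank_le_of_disjoint (disjoint_def.mpr hst))

theorem LinearIndependent.finrank_span_image_finset {ι R M : Type*} [Ring R] [Nontrivial R]
    [StrongRankCondition R] [AddCommGroup M] [Module R M] {v : ι → M} (hv : LinearIndependent R v)
    (s : Finset ι) : finrank R (span R (v '' s)) = s.card := by
  rw [Set.image_eq_range]
  exact (finrank_span_eq_card (hv.comp _ Subtype.val_injective)).trans (Fintype.card_coe s)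

section Rayleigh

variable {E ι : Type*} [NormedAddCommGroup E] [InnerProductSpace ℝ E]
  {v : ι → E} {T : E →ₗ[ℝ] E} {l : ι → ℝ} {s : Finset ι} {r : ℝ} {x : E}

theorem Orthonormal.mul_norm_sq_le_inner_of_mem_span (hv : Orthonormal ℝ v)
    (hT : ∀ j, T (v j) = l j • v j) (hr : ∀ j ∈ s, r ≤ l j) (hx : x ∈ span ℝ (v '' s)) :
    r * ‖x‖ ^ 2 ≤ ⟪x, T x⟫_ℝ := by
  obtain ⟨f, rfl⟩ := (mem_span_image_finset_iff_exists_fun' ℝ).mp hx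
  have hTx : T (∑ j ∈ s, f j • v j) = ∑ j ∈ s, (l j * f j) • v j := by
    simp only [map_sum, map_smul, hT, smul_smul, mul_comm]
  rw [hTx, ← real_inner_self_eq_norm_sq, hv.inner_sum, hv.inner_sum, Finset.mul_sum]
  refine Finset.sum_le_sum fun j hj => ?_
  simp only [conj_trivial]
  nlinarith [hr j hj, mul_self_nonneg (f j)]

theorem Orthonormal.inner_le_mul_norm_sq_of_mem_span (hv : Orthonormal ℝ v)
    (hT : ∀ j, T (v j) = l j • v j) (hr : ∀ j ∈ s, l j ≤ r) (hx : x ∈ span ℝ (v '' s)) :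
    ⟪x, T x⟫_ℝ ≤ r * ‖x‖ ^ 2 := by
  have := hv.mul_norm_sq_le_inner_of_mem_span (T := -T) (l := -l) (r := -r)
    (fun j => by simp [hT, neg_smul]) (fun j hj => neg_le_neg (hr j hj)) hx
  simp only [LinearMap.neg_apply, inner_neg_right] at this
  linarith

end Rayleigh

section Weyl

variable {E : Type*} [NormedAddCommGroup E] [InnerProductSpace ℝ E] [FiniteDimensional ℝ E]
  {n : ℕ} {A B : E →ₗ[ℝ] E} {a b : Fin n → ℝ} {v w : Fin n → E} {c : ℝ}

theorem eigenvalue_le_add_of_inner_sub_le (hn : finrank ℝ E ≤ n)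
    (hw : Orthonormal ℝ w) (hv : Orthonormal ℝ v)
    (hA : ∀ j, A (w j) = a j • w j) (hB : ∀ j, B (v j) = b j • v j)
    (ha : Antitone a) (hb : Antitone b) (hc : ∀ x, ⟪x, (A - B) x⟫_ℝ ≤ c * ‖x‖ ^ 2)
    (i : Fin n) : a i ≤ b i + c := by
  have hdim : finrank ℝ E <
      finrank ℝ (span ℝ (w '' Finset.Iic i)) + finrank ℝ (span ℝ (v '' Finset.Ici i)) := by
    rw [hw.linearIndependent.finrank_span_image_finset,
      hv.linearIndependent.finrank_span_image_finset, Fin.card_Iic, Fin.card_Ici]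
    omega
  obtain ⟨x, hxw, hxv, hx0⟩ := exists_mem_inf_ne_zero_of_finrank_lt hdim
  have hAx : a i * ‖x‖ ^ 2 ≤ ⟪x, A x⟫_ℝ :=
    hw.mul_norm_sq_le_inner_of_mem_span hA (fun j hj => ha (Finset.mem_Iic.mp hj)) hxw
  have hBx : ⟪x, B x⟫_ℝ ≤ b i * ‖x‖ ^ 2 :=
    hv.inner_le_mul_norm_sq_of_mem_span hB (fun j hj => hb (Finset.mem_Ici.mp hj)) hxv
  have hABx : ⟪x, (A - B) x⟫_ℝ = ⟪x, A x⟫_ℝ - ⟪x, B x⟫_ℝ := by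
    rw [LinearMap.sub_apply, inner_sub_right]
  have hquot : a i * ‖x‖ ^ 2 ≤ (b i + c) * ‖x‖ ^ 2 := by linarith [hc x]
  exact le_of_mul_le_mul_right hquot (by positivity)

theorem abs_eigenvalue_sub_le_of_abs_inner_sub_le (hn : finrank ℝ E ≤ n)
    (hw : Orthonormal ℝ w) (hv : Orthonormal ℝ v)
    (hA : ∀ j, A (w j) = a j • w j) (hB : ∀ j, B (v j) = b j • v j)
    (ha : Antitone a) (hb : Antitone b) (hc : ∀ x, |⟪x, (A - B) x⟫_ℝ| ≤ c * ‖x‖ ^ 2)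
    (i : Fin n) : |a i - b i| ≤ c := by
  have hAB := eigenvalue_le_add_of_inner_sub_le hn hw hv hA hB ha hb
    (fun x => (le_abs_self _).trans (hc x)) i
  have hBA := eigenvalue_le_add_of_inner_sub_le hn hv hw hB hA hb ha
    (fun x => by
      rw [← neg_sub, LinearMap.neg_apply, inner_neg_right]
      exact (neg_le_abs _).trans (hc x)) i
  rw [abs_sub_le_iff]
  constructor <;> linarith

end Weyl

theorem ip_eq_inner {n : ℕ} (x y : Fin n → ℝ) :
    ip x y = ⟪(toLp 2 x : EuclideanSpace ℝ (Fin n)), toLp 2 y⟫_ℝ := by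
  simp [ip, PiLp.inner_apply, mul_comm]

theorem evnorm_eq_norm {n : ℕ} (x : Fin n → ℝ) :
    evnorm x = ‖(toLp 2 x : EuclideanSpace ℝ (Fin n))‖ := by
  rw [evnorm, ip_eq_inner, real_inner_self_eq_norm_sq, Real.sqrt_sq (norm_nonneg _)]

theorem orthonormal_toLp_of_ip {n : ℕ} {u : Fin n → Fin n → ℝ}
    (hu : ∀ i j, ip (u i) (u j) = if i = j then 1 else 0) :
    Orthonormal ℝ fun i => (toLp 2 (u i) : EuclideanSpace ℝ (Fin n)) :=
  orthonormal_iff_ite.mpr fun i j => by rw [← ip_eq_inner, hu]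

theorem toLpLin_toLp_eq_smul {n : ℕ} {A : Matrix (Fin n) (Fin n) ℝ} {x : Fin n → ℝ} {μ : ℝ}
    (h : A.mulVec x = μ • x) : Matrix.toLpLin 2 2 A (toLp 2 x) = μ • toLp 2 x := by
  rw [Matrix.toLpLin_toLp, Matrix.toLin'_apply, h, WithLp.toLp_smul]

theorem abs_inner_toLpLin_le_of_evnorm_le {n : ℕ} {N : Matrix (Fin n) (Fin n) ℝ} {c : ℝ}
    (hc : ∀ x : Fin n → ℝ, evnorm (N.mulVec x) ≤ c * evnorm x) (x : EuclideanSpace ℝ (Fin n)) :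
    |⟪x, Matrix.toLpLin 2 2 N x⟫_ℝ| ≤ c * ‖x‖ ^ 2 := by
  have hNx : ‖Matrix.toLpLin 2 2 N x‖ ≤ c * ‖x‖ := by
    simpa only [evnorm_eq_norm, WithLp.toLp_ofLp, Matrix.toLpLin_apply] using hc (ofLp x)
  calc |⟪x, Matrix.toLpLin 2 2 N x⟫_ℝ|
      ≤ ‖x‖ * ‖Matrix.toLpLin 2 2 N x‖ := abs_real_inner_le_norm _ _
    _ ≤ ‖x‖ * (c * ‖x‖) := by gcongr
    _ = c * ‖x‖ ^ 2 := by ring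

theorem stmt_15_general (n : ℕ) (M N : Matrix (Fin n) (Fin n) ℝ)
    (mu nu : Fin n → ℝ) (u w : Fin n → (Fin n → ℝ))
    (huorth : ∀ i j : Fin n, ip (u i) (u j) = if i = j then 1 else 0)
    (hworth : ∀ i j : Fin n, ip (w i) (w j) = if i = j then 1 else 0)
    (hueig : ∀ i, M.mulVec (u i) = mu i • u i)
    (hweig : ∀ i, (M + N).mulVec (w i) = nu i • w i)
    (hmu : Antitone mu) (hnu : Antitone nu)
    (c : ℝ) (hc : ∀ x : Fin n → ℝ, evnorm (N.mulVec x) ≤ c * evnorm x) :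
    ∀ i : Fin n, |nu i - mu i| ≤ c := by
  have hdiff : Matrix.toLpLin 2 2 (M + N) - Matrix.toLpLin 2 2 M = Matrix.toLpLin 2 2 N := by
    rw [map_add, add_sub_cancel_left]
  exact abs_eigenvalue_sub_le_of_abs_inner_sub_le (finrank_euclideanSpace_fin.le)
    (orthonormal_toLp_of_ip hworth) (orthonormal_toLp_of_ip huorth)
    (fun j => toLpLin_toLp_eq_smul (hweig j)) (fun j => toLpLin_toLp_eq_smul (hueig j))
    hnu hmu (by rw [hdiff]; exact abs_inner_toLpLin_le_of_evnorm_le hc)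

theorem stmt_15 (n : ℕ) (M N : Matrix (Fin n) (Fin n) ℝ)
    (hM : M.IsSymm) (hN : N.IsSymm)
    (mu nu : Fin n → ℝ) (u w : Fin n → (Fin n → ℝ))
    (huorth : ∀ i j : Fin n, ip (u i) (u j) = if i = j then 1 else 0)
    (hworth : ∀ i j : Fin n, ip (w i) (w j) = if i = j then 1 else 0)
    (hueig : ∀ i, M.mulVec (u i) = mu i • u i)
    (hweig : ∀ i, (M + N).mulVec (w i) = nu i • w i)
    (hmu : Antitone mu) (hnu : Antitone nu)
    (c : ℝ) (hc : ∀ x : Fin n → ℝ, evnorm (N.mulVec x) ≤ c * evnorm x) :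
    ∀ i : Fin n, |nu i - mu i| ≤ c :=
  stmt_15_general n M N mu nu u w huorth hworth hueig hweig hmu hnu c hc
end
end
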